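/- Let (N,h) be an embedding up to homotopy of f : K → M with complement C ⊆ M (the closure of M − N), where M is a closed PL manifold. Then the complement of the j-fold decompression (N × D^j_{1/2} ⊆ M × D^j) deformation retracts onto a subspace homeomorphic to the j-fold fiberwise suspension Σ^j_M C = (C × D^j) ∪_{C × S^{j-1}} (M × S^{j-1}); in particular, (M × D^j) − int(N × D^j_{1/2}) is homotopy equivalent to Σ^j_M C. -/

import Mathlib

open Topology Topology.Homotopy unitInterval Metric

noncomputable section

variable {X Y Z : Type*} [TopologicalSpace X] [TopologicalSpace Y] [TopologicalSpace Z]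

/-- The map on generalized loops induced by a continuous map. -/
def GenLoop.map {N : Type*} (f : C(X, Y)) {x : X} (p : Ω^ N X x) : Ω^ N Y (f x) :=
  ⟨f.comp p.1, fun y hy => by simp [p.2 y hy]⟩

/-- The induced map on homotopy groups. -/
def HomotopyGroup.piMap (f : C(X, Y)) (n : ℕ) (x : X) :
    HomotopyGroup.Pi n X x → HomotopyGroup.Pi n Y (f x) :=
  Quotient.map (GenLoop.map f)
    (fun _ _ h => Nonempty.map (fun F => F.compContinuousMap f) h)

/-- A continuous map is a weak homotopy equivalence if it induces bijections on
all homotopy groups (including `π₀`) at all basepoints. -/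
def IsWeakHomotopyEquiv (f : C(X, Y)) : Prop :=
  ∀ (n : ℕ) (x : X), Function.Bijective (HomotopyGroup.piMap f n x)

/-- The inclusion of the unit sphere in the unit disk of Euclidean space. -/
def sphereToDisk {j : ℕ} (s : (sphere (0 : EuclideanSpace ℝ (Fin j)) 1 : Set _)) :
    (closedBall (0 : EuclideanSpace ℝ (Fin j)) 1 : Set _) :=
  ⟨s.1, sphere_subset_closedBall s.2⟩

/-- The `j`-fold unreduced suspension `Σ^j Y = (Y × D^j) ∪_{Y × S^{j-1}} (* × S^{j-1})`,
obtained from `(Y × D^j) ⊔ S^{j-1}` by gluing `(y, s)` to `s` for `s ∈ S^{j-1}`. -/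
def USp (j : ℕ) (Y : Type) [TopologicalSpace Y] : Type :=
  Quot (fun a b : (Y × (closedBall (0 : EuclideanSpace ℝ (Fin j)) 1 : Set _)) ⊕
      (sphere (0 : EuclideanSpace ℝ (Fin j)) 1 : Set _) =>
    ∃ (y : Y) (s : (sphere (0 : EuclideanSpace ℝ (Fin j)) 1 : Set _)),
      a = Sum.inl (y, sphereToDisk s) ∧ b = Sum.inr s)

instance (j : ℕ) (Y : Type) [TopologicalSpace Y] : TopologicalSpace (USp j Y) := by
  unfold USp; infer_instance

/-- The north pole of the unit sphere `S^{j-1} ⊆ ℝ^j`, for `j ≥ 1`. -/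
def northPole (j : ℕ) (h : 0 < j) : (sphere (0 : EuclideanSpace ℝ (Fin j)) 1 : Set _) :=
  ⟨EuclideanSpace.single (⟨0, h⟩ : Fin j) (1 : ℝ), by
    rw [mem_sphere_zero_iff_norm, EuclideanSpace.norm_single]; norm_num⟩

/-- The suspension point of the unreduced suspension (a point of `* × S^{j-1}`). -/
def suspPoint (j : ℕ) (h : 0 < j) (Y : Type) [TopologicalSpace Y] : USp j Y :=
  Quot.mk _ (Sum.inr (northPole j h))

/-- The configuration space of ordered `k`-tuples of pairwise distinct points of `M`. -/
def ConfigSpace (M : Type) [TopologicalSpace M] (k : ℕ) : Type :=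
  {x : Fin k → M // Function.Injective x}

instance (M : Type) [TopologicalSpace M] (k : ℕ) : TopologicalSpace (ConfigSpace M k) := by
  unfold ConfigSpace; infer_instance

/-- The fat diagonal in `M^k`: tuples with at least two equal entries. -/
def fatDiagonal (M : Type) (k : ℕ) : Set (Fin k → M) :=
  {x | ∃ i j : Fin k, i ≠ j ∧ x i = x j}

/-- The `j`-fold fiberwise suspension `Σ^j_X Y = (Y × D^j) ∪_{Y × S^{j-1}} (X × S^{j-1})`
of a space `Y` over `X` via `p : Y → X`. -/
def FibSusp (j : ℕ) {Y X : Type} [TopologicalSpace Y] [TopologicalSpace X] (p : C(Y, X)) :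
    Type :=
  Quot (fun a b : (Y × (closedBall (0 : EuclideanSpace ℝ (Fin j)) 1 : Set _)) ⊕
      (X × (sphere (0 : EuclideanSpace ℝ (Fin j)) 1 : Set _)) =>
    ∃ y s, a = Sum.inl (y, sphereToDisk s) ∧ b = Sum.inr (p y, s))

instance (j : ℕ) {Y X : Type} [TopologicalSpace Y] [TopologicalSpace X] (p : C(Y, X)) :
    TopologicalSpace (FibSusp j p) := by unfold FibSusp; infer_instance

/-- The structure map `X × S^{j-1} → Σ^j_X Y`. -/
def fibSuspIncl (j : ℕ) {Y X : Type} [TopologicalSpace Y] [TopologicalSpace X] (p : C(Y, X)) :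
    C(X × (sphere (0 : EuclideanSpace ℝ (Fin j)) 1 : Set _), FibSusp j p) :=
  ⟨fun a => Quot.mk _ (Sum.inr a), continuous_quot_mk.comp continuous_inr⟩

/-- The structure map `Σ^j_X Y → X`. -/
def fibSuspProj (j : ℕ) {Y X : Type} [TopologicalSpace Y] [TopologicalSpace X] (p : C(Y, X)) :
    C(FibSusp j p, X) :=
  ⟨Quot.lift (Sum.elim (fun a => p a.1) Prod.fst)
      (by rintro a b ⟨y, s, rfl, rfl⟩; rfl),
    continuous_quot_lift _ ((p.continuous.comp continuous_fst).sumElim continuous_fst)⟩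

/-- The complement of the `j`-fold decompression: `(M × D^j) − int(N × D^j_{1/2})`. -/
def DecompComplement (j : ℕ) (M : Type) [TopologicalSpace M] (N : Set M) : Type :=
  {p : M × EuclideanSpace ℝ (Fin j) //
    ‖p.2‖ ≤ 1 ∧ ¬(p.1 ∈ interior N ∧ ‖p.2‖ < 1 / 2)}

instance (j : ℕ) (M : Type) [TopologicalSpace M] (N : Set M) :
    TopologicalSpace (DecompComplement j M N) := by unfold DecompComplement; infer_instance

/-!
Shrinking the disk coordinate radially onto the ball of radius `1/2` deforms the complement of
`N × D^j_{1/2}` in `M × D^j` onto its part over `D^j_{1/2}`, and stays inside the complement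
because vectors of norm at least `1/2` keep norm at least `1/2`. Rescaling that part by `2`
identifies it with `Σ^j_M C`: over `C` the whole disk survives, while over `int N` only the
boundary sphere does. The identification is a continuous bijection from a compact space to a
Hausdorff one, hence a homeomorphism.
-/

namespace ContinuousMap.HomotopyEquiv

def ofDeformationRetraction (S : Set X) (H : C(X × I, X)) (h₀ : ∀ x, H (x, 0) = x)
    (h₁ : ∀ x, H (x, 1) ∈ S) (hS : ∀ x ∈ S, H (x, 1) = x) : X ≃ₕ S where
  toFun := ⟨fun x => ⟨H (x, 1), h₁ x⟩, by fun_prop⟩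
  invFun := ⟨Subtype.val, continuous_subtype_val⟩
  left_inv := Nonempty.intro <| ContinuousMap.Homotopy.symm
    { toContinuousMap := H.comp ContinuousMap.prodSwap
      map_zero_left := h₀
      map_one_left := fun _ => rfl }
  right_inv := by
    convert ContinuousMap.Homotopic.refl (ContinuousMap.id S)
    exact ContinuousMap.ext fun s => Subtype.ext (hS s s.2)

end ContinuousMap.HomotopyEquiv

section RadialShrink

variable {E : Type*} [NormedAddCommGroup E] [NormedSpace ℝ E]

/-- The straight-line homotopy, parametrised by `t`, from the identity to the radial projection
`v ↦ v / max 1 (2‖v‖)` onto the closed ball of radius `1/2`. -/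
def radialShrink (t : ℝ) (v : E) : E := (1 - t + t * (max 1 (2 * ‖v‖))⁻¹) • v

@[simp]
lemma radialShrink_zero (v : E) : radialShrink 0 v = v := by
  simp [radialShrink]

lemma radialShrink_of_norm_le_half (t : ℝ) {v : E} (hv : ‖v‖ ≤ 1 / 2) :
    radialShrink t v = v := by
  simp [radialShrink, max_eq_left (by linarith : 2 * ‖v‖ ≤ 1)]

lemma norm_radialShrink {t : ℝ} (ht₀ : 0 ≤ t) (ht₁ : t ≤ 1) (v : E) :
    ‖radialShrink t v‖ = min ‖v‖ ((1 - t) * ‖v‖ + t / 2) := by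
  rcases le_or_gt ‖v‖ (1 / 2) with hv | hv
  · rw [radialShrink_of_norm_le_half t hv, min_eq_left (by nlinarith)]
  · have hmax : max 1 (2 * ‖v‖) = 2 * ‖v‖ := max_eq_right (by linarith)
    have hcoeff : 0 ≤ 1 - t + t * (2 * ‖v‖)⁻¹ := by positivity
    rw [radialShrink, hmax, norm_smul, Real.norm_of_nonneg hcoeff, min_eq_right (by nlinarith)]
    field_simp

lemma norm_radialShrink_le {t : ℝ} (ht₀ : 0 ≤ t) (ht₁ : t ≤ 1) (v : E) :
    ‖radialShrink t v‖ ≤ ‖v‖ :=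
  (norm_radialShrink ht₀ ht₁ v).trans_le (min_le_left _ _)

lemma half_le_norm_radialShrink {t : ℝ} (ht₀ : 0 ≤ t) (ht₁ : t ≤ 1) {v : E}
    (hv : 1 / 2 ≤ ‖v‖) : 1 / 2 ≤ ‖radialShrink t v‖ := by
  rw [norm_radialShrink ht₀ ht₁]
  exact le_min hv (by nlinarith)

lemma norm_radialShrink_one_le (v : E) : ‖radialShrink 1 v‖ ≤ 1 / 2 := by
  rw [norm_radialShrink zero_le_one le_rfl]
  exact (min_le_right _ _).trans_eq (by ring)

@[fun_prop]
lemma Continuous.radialShrink {X : Type*} [TopologicalSpace X] {t : X → ℝ} {v : X → E}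
    (ht : Continuous t) (hv : Continuous v) : Continuous fun x => radialShrink (t x) (v x) := by
  have hmax : ∀ x, max 1 (2 * ‖v x‖) ≠ 0 := fun x => (lt_max_of_lt_left one_pos).ne'
  unfold _root_.radialShrink
  fun_prop (disch := exact hmax)

end RadialShrink

namespace FibSusp

variable {j : ℕ} {T B : Type} [TopologicalSpace T] [TopologicalSpace B] {p : C(T, B)}

variable (j p) in
def diskMk (a : T × closedBall (0 : EuclideanSpace ℝ (Fin j)) 1) : FibSusp j p :=
  Quot.mk _ (Sum.inl a)

lemma diskMk_sphereToDisk (t : T) (s : sphere (0 : EuclideanSpace ℝ (Fin j)) 1) :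
    diskMk j p (t, sphereToDisk s) = fibSuspIncl j p (p t, s) :=
  Quot.sound ⟨t, s, rfl, rfl⟩

@[elab_as_elim]
lemma ind {motive : FibSusp j p → Prop} (disk : ∀ a, motive (diskMk j p a))
    (base : ∀ b, motive (fibSuspIncl j p b)) (q : FibSusp j p) : motive q :=
  Quot.ind (Sum.rec disk base) q

def lift {Z : Type*} (f : T × closedBall (0 : EuclideanSpace ℝ (Fin j)) 1 → Z)
    (g : B × sphere (0 : EuclideanSpace ℝ (Fin j)) 1 → Z)
    (h : ∀ t s, f (t, sphereToDisk s) = g (p t, s)) : FibSusp j p → Z :=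
  Quot.lift (Sum.elim f g) (by rintro _ _ ⟨t, s, rfl, rfl⟩; exact h t s)

lemma continuous_lift {Z : Type*} [TopologicalSpace Z]
    {f : T × closedBall (0 : EuclideanSpace ℝ (Fin j)) 1 → Z}
    {g : B × sphere (0 : EuclideanSpace ℝ (Fin j)) 1 → Z}
    (h : ∀ t s, f (t, sphereToDisk s) = g (p t, s)) (hf : Continuous f) (hg : Continuous g) :
    Continuous (lift f g h) :=
  continuous_quot_lift _ (hf.sumElim hg)

instance [CompactSpace T] [CompactSpace B] : CompactSpace (FibSusp j p) :=
  have : CompactSpace (closedBall (0 : EuclideanSpace ℝ (Fin j)) 1) :=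
    isCompact_iff_compactSpace.1 (isCompact_closedBall _ _)
  have : CompactSpace (sphere (0 : EuclideanSpace ℝ (Fin j)) 1) :=
    isCompact_iff_compactSpace.1 (isCompact_sphere _ _)
  Quot.compactSpace

end FibSusp

namespace DecompComplement

variable {j : ℕ} {M : Type} [TopologicalSpace M] {N : Set M}

instance [T2Space M] : T2Space (DecompComplement j M N) := by
  unfold DecompComplement; infer_instance

variable (j M N) in
def halfBall : Set (DecompComplement j M N) := {x | ‖x.1.2‖ ≤ 1 / 2}

def radialDeformation : C(DecompComplement j M N × I, DecompComplement j M N) where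
  toFun p := ⟨(p.1.1.1, radialShrink p.2 p.1.1.2),
    (norm_radialShrink_le p.2.2.1 p.2.2.2 _).trans p.1.2.1,
    fun ⟨hm, hlt⟩ => hlt.not_ge <| half_le_norm_radialShrink p.2.2.1 p.2.2.2 <|
      not_lt.1 fun hv => p.1.2.2 ⟨hm, hv⟩⟩
  continuous_toFun := by fun_prop

lemma radialDeformation_zero (x : DecompComplement j M N) : radialDeformation (x, 0) = x :=
  Subtype.ext <| Prod.ext rfl (radialShrink_zero _)

lemma radialDeformation_one_mem (x : DecompComplement j M N) :
    radialDeformation (x, 1) ∈ halfBall j M N :=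
  norm_radialShrink_one_le x.1.2

lemma radialDeformation_of_mem {x : DecompComplement j M N} (hx : x ∈ halfBall j M N) (t : I) :
    radialDeformation (x, t) = x :=
  Subtype.ext <| Prod.ext rfl (radialShrink_of_norm_le_half _ hx)

lemma norm_eq_half_of_mem_interior (x : halfBall j M N) (hx : x.1.1.1 ∈ interior N) :
    ‖x.1.1.2‖ = 1 / 2 :=
  le_antisymm x.2 (not_lt.1 fun hlt => x.1.2.2 ⟨hx, hlt⟩)

def halfBallMk (m : M) (v : EuclideanSpace ℝ (Fin j)) (hv : ‖v‖ ≤ 1)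
    (hm : m ∈ interior N → ‖v‖ = 1) : halfBall j M N :=
  ⟨⟨(m, (2 : ℝ)⁻¹ • v), by rw [norm_smul]; norm_num; linarith,
    fun ⟨hN, hlt⟩ => by rw [norm_smul, hm hN] at hlt; norm_num at hlt⟩,
    show ‖(2 : ℝ)⁻¹ • v‖ ≤ 1 / 2 by rw [norm_smul]; norm_num; linarith⟩

variable {C : Set M}

variable (j) in
def fibSuspToHalfBall (hC : (interior N)ᶜ = C) :
    FibSusp j (⟨Subtype.val, continuous_subtype_val⟩ : C(↥C, M)) → halfBall j M N :=
  FibSusp.lift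
    (fun a => halfBallMk a.1.1 a.2.1 (mem_closedBall_zero_iff.1 a.2.2)
      fun h => ((hC ▸ a.1.2 : a.1.1 ∈ (interior N)ᶜ) h).elim)
    (fun b => halfBallMk b.1 b.2.1 (mem_sphere_zero_iff_norm.1 b.2.2).le
      fun _ => mem_sphere_zero_iff_norm.1 b.2.2)
    fun _ _ => rfl

lemma continuous_fibSuspToHalfBall (hC : (interior N)ᶜ = C) :
    Continuous (fibSuspToHalfBall j hC) := by
  refine FibSusp.continuous_lift _ ?_ ?_ <;>
    refine Continuous.subtype_mk (Continuous.subtype_mk ?_ _) _ <;> fun_prop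

lemma norm_two_smul_le_one (x : halfBall j M N) : ‖(2 : ℝ) • x.1.1.2‖ ≤ 1 := by
  have hx : ‖x.1.1.2‖ ≤ 1 / 2 := x.2
  rw [norm_smul]
  norm_num
  linarith

open Classical in
def halfBallToFibSusp (hC : (interior N)ᶜ = C) (x : halfBall j M N) :
    FibSusp j (⟨Subtype.val, continuous_subtype_val⟩ : C(↥C, M)) :=
  if h : x.1.1.1 ∈ C then
    FibSusp.diskMk j _ (⟨_, h⟩,
      ⟨(2 : ℝ) • x.1.1.2, mem_closedBall_zero_iff.2 (norm_two_smul_le_one x)⟩)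
  else
    fibSuspIncl j _ (x.1.1.1, ⟨(2 : ℝ) • x.1.1.2, mem_sphere_zero_iff_norm.2 <| by
      rw [norm_smul, norm_eq_half_of_mem_interior x (not_not.1 fun h' => h (hC ▸ h'))]
      norm_num⟩)

lemma halfBallToFibSusp_fibSuspToHalfBall (hC : (interior N)ᶜ = C)
    (q : FibSusp j (⟨Subtype.val, continuous_subtype_val⟩ : C(↥C, M))) :
    halfBallToFibSusp hC (fibSuspToHalfBall j hC q) = q := by
  induction q using FibSusp.ind with
  | disk a =>
    unfold halfBallToFibSusp
    split_ifs with h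
    · exact congrArg _ (Prod.ext rfl (Subtype.ext (smul_inv_smul₀ two_ne_zero _)))
    · exact absurd a.1.2 h
  | base b =>
    unfold halfBallToFibSusp
    split_ifs with h
    · refine Eq.trans ?_ (FibSusp.diskMk_sphereToDisk (⟨b.1, h⟩ : C) b.2)
      exact congrArg _ (Prod.ext rfl (Subtype.ext (smul_inv_smul₀ two_ne_zero _)))
    · exact congrArg _ (Prod.ext rfl (Subtype.ext (smul_inv_smul₀ two_ne_zero _)))

lemma fibSuspToHalfBall_halfBallToFibSusp (hC : (interior N)ᶜ = C) (x : halfBall j M N) :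
    fibSuspToHalfBall j hC (halfBallToFibSusp hC x) = x := by
  unfold halfBallToFibSusp
  split_ifs <;>
  · apply Subtype.ext
    apply Subtype.ext
    exact Prod.ext rfl (inv_smul_smul₀ two_ne_zero _)

def fibSuspHomeomorphHalfBall [T2Space M] [CompactSpace M] (hC : (interior N)ᶜ = C) :
    FibSusp j (⟨Subtype.val, continuous_subtype_val⟩ : C(↥C, M)) ≃ₜ halfBall j M N :=
  have : CompactSpace C :=
    isCompact_iff_compactSpace.1 (hC ▸ isOpen_interior.isClosed_compl.isCompact)
  (continuous_fibSuspToHalfBall hC).homeoOfEquivCompactToT2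
    (f := ⟨fibSuspToHalfBall j hC, halfBallToFibSusp hC,
      halfBallToFibSusp_fibSuspToHalfBall hC, fibSuspToHalfBall_halfBallToFibSusp hC⟩)

end DecompComplement

theorem decompression_complement_retracts_to_fibSusp_general (M : Type)
    [TopologicalSpace M] [T2Space M] [CompactSpace M]
    (j : ℕ) (N C : Set M)
    (hcompl : Set.univ \ interior N = C) :
    ∃ S' : Set (DecompComplement j M N),
      (∃ H : C(DecompComplement j M N × I, DecompComplement j M N),
        (∀ x, H (x, 0) = x) ∧ (∀ x, H (x, 1) ∈ S') ∧ ∀ x ∈ S', ∀ t, H (x, t) = x) ∧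
      Nonempty (↥S' ≃ₜ
        FibSusp j (⟨Subtype.val, continuous_subtype_val⟩ : C(↥C, M))) ∧
      Nonempty (ContinuousMap.HomotopyEquiv (DecompComplement j M N)
        (FibSusp j (⟨Subtype.val, continuous_subtype_val⟩ : C(↥C, M)))) := by
  let e := DecompComplement.fibSuspHomeomorphHalfBall (j := j)
    ((Set.compl_eq_univ_sdiff _).trans hcompl)
  open DecompComplement in
  exact ⟨halfBall j M N, ⟨radialDeformation, radialDeformation_zero, radialDeformation_one_mem,
    fun _ hx => radialDeformation_of_mem hx⟩, ⟨e.symm⟩,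
    ⟨(ContinuousMap.HomotopyEquiv.ofDeformationRetraction _ _ radialDeformation_zero
      radialDeformation_one_mem fun _ hx => radialDeformation_of_mem hx 1).trans
        e.symm.toHomotopyEquiv⟩⟩

/-- For a closed manifold `M`, a compact codimension-zero piece `N` with
complement `C = cl(M − N)`, the complement of the `j`-fold decompression deformation
retracts onto a subspace homeomorphic to the fiberwise suspension `Σ^j_M C`; in
particular it is homotopy equivalent to `Σ^j_M C`. -/
theorem decompression_complement_retracts_to_fibSusp (d : ℕ) (M : Type)
    [TopologicalSpace M] [T2Space M] [CompactSpace M]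
    [ChartedSpace (EuclideanSpace ℝ (Fin d)) M]
    (j : ℕ) (hj : 1 ≤ j) (N C : Set M) (hN : IsCompact N)
    (hC : C = closure Nᶜ) (hcompl : Set.univ \ interior N = C) :
    ∃ S' : Set (DecompComplement j M N),
      (∃ H : C(DecompComplement j M N × I, DecompComplement j M N),
        (∀ x, H (x, 0) = x) ∧ (∀ x, H (x, 1) ∈ S') ∧ ∀ x ∈ S', ∀ t, H (x, t) = x) ∧
      Nonempty (↥S' ≃ₜ
        FibSusp j (⟨Subtype.val, continuous_subtype_val⟩ : C(↥C, M))) ∧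
      Nonempty (ContinuousMap.HomotopyEquiv (DecompComplement j M N)
        (FibSusp j (⟨Subtype.val, continuous_subtype_val⟩ : C(↥C, M)))) :=
  decompression_complement_retracts_to_fibSusp_general M j N C hcompl
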